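/- arXiv:2402.15076 — 2 statements merged into one kernel-verified Lean document; each statement's English description precedes it below -/
import Mathlib

section
/- Let H be the graph constructed from G and ℓ. For any vertex set S ⊆ V ∪ X ∪ Y, S is a target set for H if and only if X ⊆ S, or Y ⊆ S, or S ∩ V is a target set for G. -/
namespace TSS

variable {V : Type*}

/-- The set of active vertices after `i` steps of the activation process started from `S`. -/
def activeAt (G : SimpleGraph V) (τ : V → ℕ) (S : Set V) : ℕ → Set V
  | 0 => S
  | i + 1 => activeAt G τ S i ∪ { v | τ v ≤ (G.neighborSet v ∩ activeAt G τ S i).ncard }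

/-- The active vertex set `𝒜(S) = ⋃ i, 𝒜ⁱ(S)`. -/
def activeSet (G : SimpleGraph V) (τ : V → ℕ) (S : Set V) : Set V :=
  ⋃ i, activeAt G τ S i

/-- `S` is a target set for `(G, τ)` if it activates every vertex. -/
def IsTargetSet (G : SimpleGraph V) (τ : V → ℕ) (S : Set V) : Prop :=
  activeSet G τ S = Set.univ

/-- Minimum size of a target set. -/
noncomputable def optTS (G : SimpleGraph V) (τ : V → ℕ) : ℕ :=
  sInf { m | ∃ S : Set V, IsTargetSet G τ S ∧ S.ncard = m }

/-- A reconfiguration sequence `Sfam 0 = X, …, Sfam T = Y` of target sets where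
consecutive sets differ in exactly one vertex. -/
structure IsReconfSeq (G : SimpleGraph V) (τ : V → ℕ) (X Y : Set V) (T : ℕ)
    (Sfam : ℕ → Set V) : Prop where
  head : Sfam 0 = X
  last : Sfam T = Y
  target : ∀ t ≤ T, IsTargetSet G τ (Sfam t)
  step : ∀ t < T, (symmDiff (Sfam t) (Sfam (t + 1))).ncard = 1

/-- The size of a reconfiguration sequence: maximum cardinality of any member. -/
noncomputable def seqSize (T : ℕ) (Sfam : ℕ → Set V) : ℕ :=
  (Finset.range (T + 1)).sup fun t => (Sfam t).ncard

/-- `opt_G(X ⇝ Y)`: minimum size over all reconfiguration sequences from `X` to `Y`. -/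
noncomputable def optReconf (G : SimpleGraph V) (τ : V → ℕ) (X Y : Set V) : ℕ :=
  sInf { m | ∃ T Sfam, IsReconfSeq G τ X Y T Sfam ∧ seqSize T Sfam = m }

/-- The four internal vertices of a one-way gadget. -/
inductive GadVert where | t | h | b1 | b2

/-- Index set of the one-way gadgets of the graph `H` built from `G` (with degree
function `d`) and `ℓ`. -/
inductive GadIdx (V : Type*) (ℓ : ℕ) (d : V → ℕ) where
  | vx (v : V) (i : Fin ℓ)
  | xa (i : Fin ℓ) (v : V) (j : Fin (d v))
  | av (v : V) (j : Fin (d v))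
  | vy (v : V) (i : Fin ℓ)
  | yb (i : Fin ℓ) (v : V) (j : Fin (d v))
  | bv (v : V) (j : Fin (d v))

/-- Vertices of the graph `H`: a copy of `V`, the sets `X`, `Y`, `A`, `B`, and the
internal vertices of all one-way gadgets. -/
inductive HVert (V : Type*) (ℓ : ℕ) (d : V → ℕ) where
  | orig (v : V)
  | xx (i : Fin ℓ)
  | yy (i : Fin ℓ)
  | aa (v : V) (j : Fin (d v))
  | bb (v : V) (j : Fin (d v))
  | gad (D : GadIdx V ℓ d) (w : GadVert)

variable {ℓ : ℕ} {d : V → ℕ}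

/-- The tail of a one-way gadget. -/
def gadTail : GadIdx V ℓ d → HVert V ℓ d
  | .vx v _ => .orig v
  | .xa i _ _ => .xx i
  | .av v j => .aa v j
  | .vy v _ => .orig v
  | .yb i _ _ => .yy i
  | .bv v j => .bb v j

/-- The head of a one-way gadget. -/
def gadHead : GadIdx V ℓ d → HVert V ℓ d
  | .vx _ i => .xx i
  | .xa _ v j => .aa v j
  | .av v _ => .orig v
  | .vy _ i => .yy i
  | .yb _ v j => .bb v j
  | .bv v _ => .orig v

/-- Base edge relation of the graph `H`. -/
def HRel (G : SimpleGraph V) (ℓ : ℕ) (d : V → ℕ) : HVert V ℓ d → HVert V ℓ d → Prop :=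
  fun p q =>
    (∃ u v, G.Adj u v ∧ p = .orig u ∧ q = .orig v) ∨
    (∃ D, p = .gad D .t ∧ (q = .gad D .b1 ∨ q = .gad D .b2)) ∨
    (∃ D, p = .gad D .h ∧ (q = .gad D .b1 ∨ q = .gad D .b2)) ∨
    (∃ D, p = gadTail D ∧ q = .gad D .t) ∨
    (∃ D, p = gadHead D ∧ q = .gad D .h)

/-- The graph `H` constructed from `G` (with degree function `d`) and `ℓ`. -/
def graphH (G : SimpleGraph V) (ℓ : ℕ) (d : V → ℕ) : SimpleGraph (HVert V ℓ d) :=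
  SimpleGraph.fromRel (HRel G ℓ d)

/-- The threshold function `τ'` of `H`, where `n` is the number of vertices of `G`. -/
def tauH (τ : V → ℕ) (n ℓ : ℕ) (d : V → ℕ) : HVert V ℓ d → ℕ
  | .orig v => τ v
  | .xx _ => n
  | .yy _ => n
  | .aa _ _ => ℓ
  | .bb _ _ => ℓ
  | .gad _ .t => 1
  | .gad _ .b1 => 1
  | .gad _ .b2 => 1
  | .gad _ .h => 2

/-- The vertex set `X = {x₁, …, x_ℓ}` of `H`. -/
def XSet (V : Type*) (ℓ : ℕ) (d : V → ℕ) : Set (HVert V ℓ d) := Set.range HVert.xx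

/-- The vertex set `Y = {y₁, …, y_ℓ}` of `H`. -/
def YSet (V : Type*) (ℓ : ℕ) (d : V → ℕ) : Set (HVert V ℓ d) := Set.range HVert.yy

/-- The copy of `V` inside `V(H)`. -/
def OrigSet (V : Type*) (ℓ : ℕ) (d : V → ℕ) : Set (HVert V ℓ d) := Set.range HVert.orig

/-- The vertex set `A = {a_{v,j}}` of `H`. -/
def ASet (V : Type*) (ℓ : ℕ) (d : V → ℕ) : Set (HVert V ℓ d) :=
  { p | ∃ v j, p = HVert.aa v j }

/-- The vertex set `B = {b_{v,j}}` of `H`. -/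
def BSet (V : Type*) (ℓ : ℕ) (d : V → ℕ) : Set (HVert V ℓ d) :=
  { p | ∃ v j, p = HVert.bb v j }

end TSS

/-!
`𝒜(S)` is the least superset of `S` closed under the activation rule (a vertex with at least
`τ(v)` neighbours in the set belongs to it), so both directions are arguments about closed sets.

If every vertex of `V` is active, every one-way gadget fires from its tail, so each `xᵢ`, `yᵢ`
(threshold `n`) sees `n` active gadget heads, each `a_{v,j}`, `b_{v,j}` (threshold `ℓ`) sees `ℓ`,
and everything becomes active. If `X ⊆ S`, all of `A` fires and then each `v` sees
`d_v ≥ τ(v)` active heads; symmetrically for `Y`. A target set of `G` activates `V` because the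
copy of `G` inside `H` simulates `G`.

Conversely, activation never crosses a gadget from head to tail. Suppose `X ⊄ S`, `Y ⊄ S` and
`𝒜_G(S ∩ V) ≠ V`, and let `T = 𝒜_G(S ∩ V) ∪ S`. The vertices of `T` together with the interiors
of the gadgets whose tail lies in `T` form a closed set of `H`: a vertex of `V` outside `T` has
its active neighbours in `𝒜_G(S ∩ V)`, an `xᵢ ∉ S` sees fewer than `n` active heads, an
`a_{v,j}` fewer than `ℓ`, and a gadget with inactive tail never starts. It contains `S` but misses
a vertex of `V`, so `S` is not a target set of `H`.
-/

namespace TSS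

section Activation

variable {V : Type*} {G : SimpleGraph V} {τ : V → ℕ}

def ActivationClosed (G : SimpleGraph V) (τ : V → ℕ) (W : Set V) : Prop :=
  ∀ v, τ v ≤ (G.neighborSet v ∩ W).ncard → v ∈ W

theorem activeAt_mono (S : Set V) : Monotone (activeAt G τ S) :=
  monotone_nat_of_le_succ fun _ _ hv => Or.inl hv

theorem subset_activeSet (S : Set V) : S ⊆ activeSet G τ S :=
  Set.subset_iUnion (activeAt G τ S) 0

theorem activationClosed_activeSet (S : Set V) : ActivationClosed G τ (activeSet G τ S) := by
  intro v hv
  by_cases hfin : (G.neighborSet v ∩ activeSet G τ S).Finite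
  · obtain ⟨i, hi⟩ := (activeAt_mono (G := G) (τ := τ) S).directed_le
      |>.exists_mem_subset_of_finset_subset_biUnion
        (s := hfin.toFinset) (by rw [Set.Finite.coe_toFinset]; exact Set.inter_subset_right)
    have heq : G.neighborSet v ∩ activeAt G τ S i = G.neighborSet v ∩ activeSet G τ S :=
      subset_antisymm (Set.inter_subset_inter_right _ (Set.subset_iUnion _ i))
        fun w hw => ⟨hw.1, hi (by simpa using hw)⟩
    exact Set.mem_iUnion_of_mem (i + 1) (Or.inr (show τ v ≤ _ from heq ▸ hv))
  · -- an infinite neighbourhood has `ncard = 0`, so `v` is activated in the first round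
    rw [Set.Infinite.ncard hfin] at hv
    exact Set.mem_iUnion_of_mem 1 (Or.inr (hv.trans (Nat.zero_le _)))

theorem activeSet_subset_of_activationClosed [Finite V] {S W : Set V} (hSW : S ⊆ W)
    (hW : ActivationClosed G τ W) : activeSet G τ S ⊆ W := by
  refine Set.iUnion_subset fun i => ?_
  induction i with
  | zero => exact hSW
  | succ i ih =>
    rintro v (hv | hv)
    · exact ih hv
    · exact hW v (hv.trans (Set.ncard_le_ncard (Set.inter_subset_inter_right _ ih)))

theorem ActivationClosed.mem_of_le_ncard [Finite V] {W : Set V} (hW : ActivationClosed G τ W)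
    {v : V} {s : Set V} (hs : s ⊆ G.neighborSet v ∩ W) (h : τ v ≤ s.ncard) : v ∈ W :=
  hW v (h.trans (Set.ncard_le_ncard hs))

end Activation

section GraphH

variable {V : Type*} {ℓ : ℕ} {d : V → ℕ}

instance : Finite GadVert :=
  Finite.of_injective
    (fun w : GadVert => match w with | .t => (0 : Fin 4) | .h => 1 | .b1 => 2 | .b2 => 3)
    (by intro a b; cases a <;> cases b <;> simp)

instance [Finite V] : Finite (GadIdx V ℓ d) :=
  Finite.of_injective
    (β := (V × Fin ℓ) ⊕ (Fin ℓ × Σ v, Fin (d v)) ⊕ (Σ v, Fin (d v)) ⊕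
      (V × Fin ℓ) ⊕ (Fin ℓ × Σ v, Fin (d v)) ⊕ (Σ v, Fin (d v)))
    (fun D => match D with
      | .vx v i => .inl (v, i)
      | .xa i v j => .inr (.inl (i, ⟨v, j⟩))
      | .av v j => .inr (.inr (.inl ⟨v, j⟩))
      | .vy v i => .inr (.inr (.inr (.inl (v, i))))
      | .yb i v j => .inr (.inr (.inr (.inr (.inl (i, ⟨v, j⟩)))))
      | .bv v j => .inr (.inr (.inr (.inr (.inr ⟨v, j⟩)))))
    (by intro a b; cases a <;> cases b <;> simp)

instance [Finite V] : Finite (HVert V ℓ d) :=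
  Finite.of_injective
    (β := V ⊕ Fin ℓ ⊕ Fin ℓ ⊕ (Σ v, Fin (d v)) ⊕ (Σ v, Fin (d v)) ⊕ (GadIdx V ℓ d × GadVert))
    (fun p => match p with
      | .orig v => .inl v
      | .xx i => .inr (.inl i)
      | .yy i => .inr (.inr (.inl i))
      | .aa v j => .inr (.inr (.inr (.inl ⟨v, j⟩)))
      | .bb v j => .inr (.inr (.inr (.inr (.inl ⟨v, j⟩))))
      | .gad D w => .inr (.inr (.inr (.inr (.inr (D, w))))))
    (by intro a b; cases a <;> cases b <;> simp)

variable (G : SimpleGraph V)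

theorem graphH_adj_orig {u v : V} (h : G.Adj u v) :
    (graphH G ℓ d).Adj (.orig u) (.orig v) :=
  (SimpleGraph.fromRel_adj _ _ _).2 ⟨by simp [h.ne], .inl (.inl ⟨u, v, h, rfl, rfl⟩)⟩

theorem graphH_adj_tail (D : GadIdx V ℓ d) : (graphH G ℓ d).Adj (gadTail D) (.gad D .t) :=
  (SimpleGraph.fromRel_adj _ _ _).2
    ⟨by cases D <;> simp [gadTail], .inl (.inr (.inr (.inr (.inl ⟨D, rfl, rfl⟩))))⟩

theorem graphH_adj_head (D : GadIdx V ℓ d) : (graphH G ℓ d).Adj (gadHead D) (.gad D .h) :=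
  (SimpleGraph.fromRel_adj _ _ _).2
    ⟨by cases D <;> simp [gadHead], .inl (.inr (.inr (.inr (.inr ⟨D, rfl, rfl⟩))))⟩

theorem graphH_adj_t_b (D : GadIdx V ℓ d) {b : GadVert} (hb : b = .b1 ∨ b = .b2) :
    (graphH G ℓ d).Adj (.gad D .t) (.gad D b) :=
  (SimpleGraph.fromRel_adj _ _ _).2
    ⟨by rcases hb with rfl | rfl <;> simp, .inl (.inr (.inl ⟨D, rfl, by simpa using hb⟩))⟩

theorem graphH_adj_h_b (D : GadIdx V ℓ d) {b : GadVert} (hb : b = .b1 ∨ b = .b2) :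
    (graphH G ℓ d).Adj (.gad D .h) (.gad D b) :=
  (SimpleGraph.fromRel_adj _ _ _).2
    ⟨by rcases hb with rfl | rfl <;> simp, .inl (.inr (.inr (.inl ⟨D, rfl, by simpa using hb⟩)))⟩

def gadgetAnchor : HVert V ℓ d → HVert V ℓ d
  | .gad D _ => gadTail D
  | p => p

@[simp]
theorem gadgetAnchor_gad (D : GadIdx V ℓ d) (w : GadVert) :
    gadgetAnchor (.gad D w) = gadTail D := rfl

@[simp]
theorem gadgetAnchor_gadTail (D : GadIdx V ℓ d) : gadgetAnchor (gadTail D) = gadTail D := by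
  cases D <;> rfl

theorem graphH_adj_cases {p q : HVert V ℓ d} (h : (graphH G ℓ d).Adj p q) :
    (∃ u v, G.Adj u v ∧ p = .orig u ∧ q = .orig v) ∨ gadgetAnchor p = gadgetAnchor q ∨
      (∃ D, p = gadHead D ∧ q = .gad D .h) ∨ (∃ D, p = .gad D .h ∧ q = gadHead D) := by
  rw [graphH, SimpleGraph.fromRel_adj] at h
  obtain ⟨-, h | h⟩ := h <;>
  rcases h with ⟨u, v, _, rfl, rfl⟩ | ⟨D, rfl, rfl | rfl⟩ | ⟨D, rfl, rfl | rfl⟩ | ⟨D, rfl, rfl⟩ |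
    ⟨D, rfl, rfl⟩ <;>
  simp_all [SimpleGraph.adj_comm]

end GraphH

section Propagation

variable {V : Type*} [Finite V] {ℓ : ℕ} {d : V → ℕ} {G : SimpleGraph V} {τ : V → ℕ} {n : ℕ}
  {W : Set (HVert V ℓ d)}

theorem ActivationClosed.gad_mem (hW : ActivationClosed (graphH G ℓ d) (tauH τ n ℓ d) W)
    {D : GadIdx V ℓ d} (hD : gadTail D ∈ W) (w : GadVert) : .gad D w ∈ W := by
  have ht : .gad D .t ∈ W :=
    hW.mem_of_le_ncard (s := {gadTail D}) (by simpa using ⟨(graphH_adj_tail G D).symm, hD⟩)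
      (by simp [tauH])
  have hb : ∀ b, b = .b1 ∨ b = .b2 → .gad D b ∈ W := fun b hb =>
    hW.mem_of_le_ncard (s := {.gad D .t}) (by simpa using ⟨(graphH_adj_t_b G D hb).symm, ht⟩)
      (by rcases hb with rfl | rfl <;> simp [tauH])
  cases w with
  | t => exact ht
  | b1 => exact hb _ (.inl rfl)
  | b2 => exact hb _ (.inr rfl)
  | h =>
    refine hW.mem_of_le_ncard (s := {.gad D .b1, .gad D .b2}) ?_ (by simp [tauH])
    rintro _ (rfl | rfl)
    · exact ⟨graphH_adj_h_b G D (.inl rfl), hb _ (.inl rfl)⟩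
    · exact ⟨graphH_adj_h_b G D (.inr rfl), hb _ (.inr rfl)⟩

theorem ActivationClosed.mem_of_gadget_heads
    (hW : ActivationClosed (graphH G ℓ d) (tauH τ n ℓ d) W) {p : HVert V ℓ d} {ι : Type*}
    (f : ι → GadIdx V ℓ d) (hf : f.Injective) (hhead : ∀ i, gadHead (f i) = p)
    (htail : ∀ i, gadTail (f i) ∈ W) (hτ : tauH τ n ℓ d p ≤ Nat.card ι) : p ∈ W := by
  refine hW.mem_of_le_ncard (s := Set.range fun i => .gad (f i) .h) ?_ ?_
  · rintro _ ⟨i, rfl⟩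
    exact ⟨hhead i ▸ graphH_adj_head G (f i), hW.gad_mem (htail i) _⟩
  · rwa [Set.ncard_range_of_injective fun i j hij => hf (HVert.gad.inj hij).1]

theorem ActivationClosed.orig_mem_of_xx_mem
    (hW : ActivationClosed (graphH G ℓ d) (tauH τ n ℓ d) W) (hτ : ∀ v, τ v ≤ d v)
    (hX : ∀ k, HVert.xx k ∈ W) (v : V) : .orig v ∈ W :=
  hW.mem_of_gadget_heads (fun j => .av v j) (fun _ _ h => eq_of_heq (GadIdx.av.inj h).2)
    (fun _ => rfl)
    (fun j => hW.mem_of_gadget_heads (fun k => .xa k v j) (fun _ _ h => (GadIdx.xa.inj h).1)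
      (fun _ => rfl) hX (by simp [tauH, gadTail]))
    (by simpa [tauH] using hτ v)

theorem ActivationClosed.orig_mem_of_yy_mem
    (hW : ActivationClosed (graphH G ℓ d) (tauH τ n ℓ d) W) (hτ : ∀ v, τ v ≤ d v)
    (hY : ∀ k, HVert.yy k ∈ W) (v : V) : .orig v ∈ W :=
  hW.mem_of_gadget_heads (fun j => .bv v j) (fun _ _ h => eq_of_heq (GadIdx.bv.inj h).2)
    (fun _ => rfl)
    (fun j => hW.mem_of_gadget_heads (fun k => .yb k v j) (fun _ _ h => (GadIdx.yb.inj h).1)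
      (fun _ => rfl) hY (by simp [tauH, gadTail]))
    (by simpa [tauH] using hτ v)

theorem ActivationClosed.setOf_orig_mem
    (hW : ActivationClosed (graphH G ℓ d) (tauH τ n ℓ d) W) :
    ActivationClosed G τ {v | HVert.orig v ∈ W} :=
  fun v hv => hW.mem_of_le_ncard (s := HVert.orig '' (G.neighborSet v ∩ {v | .orig v ∈ W}))
    (by rintro _ ⟨u, ⟨hu, huW⟩, rfl⟩; exact ⟨graphH_adj_orig G hu, huW⟩)
    (by rwa [Set.ncard_image_of_injective _ fun _ _ h => HVert.orig.inj h])

theorem activeSet_subset_setOf_orig_mem_activeSet_graphH (S : Set (HVert V ℓ d)) :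
    activeSet G τ {v | HVert.orig v ∈ S} ⊆
      {v | HVert.orig v ∈ activeSet (graphH G ℓ d) (tauH τ n ℓ d) S} :=
  activeSet_subset_of_activationClosed (fun _ hv => subset_activeSet S hv)
    (activationClosed_activeSet S).setOf_orig_mem

end Propagation

theorem ActivationClosed.eq_univ_of_orig_mem {V : Type*} [Fintype V] {ℓ : ℕ} {d : V → ℕ}
    {G : SimpleGraph V} {τ : V → ℕ} {W : Set (HVert V ℓ d)}
    (hW : ActivationClosed (graphH G ℓ d) (tauH τ (Fintype.card V) ℓ d) W)
    (hV : ∀ v, HVert.orig v ∈ W) : W = Set.univ := by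
  have hX (k : Fin ℓ) : HVert.xx k ∈ W :=
    hW.mem_of_gadget_heads (fun v => .vx v k) (fun _ _ h => (GadIdx.vx.inj h).1) (fun _ => rfl)
      hV (by simp [tauH])
  have hY (k : Fin ℓ) : HVert.yy k ∈ W :=
    hW.mem_of_gadget_heads (fun v => .vy v k) (fun _ _ h => (GadIdx.vy.inj h).1) (fun _ => rfl)
      hV (by simp [tauH])
  have hA (v : V) (j : Fin (d v)) : HVert.aa v j ∈ W :=
    hW.mem_of_gadget_heads (fun k => .xa k v j) (fun _ _ h => (GadIdx.xa.inj h).1)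
      (fun _ => rfl) hX (by simp [tauH])
  have hB (v : V) (j : Fin (d v)) : HVert.bb v j ∈ W :=
    hW.mem_of_gadget_heads (fun k => .yb k v j) (fun _ _ h => (GadIdx.yb.inj h).1)
      (fun _ => rfl) hY (by simp [tauH])
  have hTail (D : GadIdx V ℓ d) : gadTail D ∈ W := by
    cases D <;> simp only [gadTail, hV, hX, hY, hA, hB]
  refine Set.eq_univ_of_forall fun p => ?_
  cases p with
  | orig v => exact hV v
  | xx k => exact hX k
  | yy k => exact hY k
  | aa v j => exact hA v j
  | bb v j => exact hB v j
  | gad D w => exact hW.gad_mem (hTail D) w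

section OneWay

variable {V : Type*} {ℓ : ℕ} {d : V → ℕ} {G : SimpleGraph V} {τ : V → ℕ}
  {T : Set (HVert V ℓ d)}

theorem neighbor_cases_of_gadgetAnchor_not_mem {p q : HVert V ℓ d}
    (hq : q ∈ (graphH G ℓ d).neighborSet p ∩ gadgetAnchor ⁻¹' T)
    (hp : gadgetAnchor p ∉ T) :
    (∃ u v, G.Adj u v ∧ p = .orig u ∧ q = .orig v) ∨
      (∃ D, p = gadHead D ∧ q = .gad D .h ∧ gadTail D ∈ T) ∨
      (∃ D, p = .gad D .h ∧ q = gadHead D) := by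
  obtain ⟨hpq, hqT⟩ := hq
  rcases graphH_adj_cases G hpq with h | h | ⟨D, rfl, rfl⟩ | h
  · exact .inl h
  · exact absurd (h ▸ hqT) hp
  · exact .inr (.inl ⟨D, rfl, rfl, hqT⟩)
  · exact .inr (.inr h)

theorem ncard_neighborSet_inter_preimage_lt_tauH_gad {n : ℕ} {D : GadIdx V ℓ d} {w : GadVert}
    (hD : gadTail D ∉ T) :
    ((graphH G ℓ d).neighborSet (.gad D w) ∩ gadgetAnchor ⁻¹' T).ncard <
      tauH τ n ℓ d (.gad D w) := by
  calc _ ≤ {q | w = .h ∧ q = gadHead D}.ncard := by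
        refine Set.ncard_le_ncard (fun q hq => ?_)
          ((Set.finite_singleton (gadHead D)).subset fun _ hq => hq.2)
        rcases neighbor_cases_of_gadgetAnchor_not_mem hq hD with
          ⟨_, _, _, hDu, rfl⟩ | ⟨D', hD', rfl, _⟩ | ⟨D', hD', rfl⟩
        · cases hDu
        · cases D' <;> cases hD'
        · cases hD'
          exact ⟨rfl, rfl⟩
    _ < _ := by cases w <;> simp [tauH]

variable [Fintype V]

theorem ncard_neighborSet_inter_preimage_lt_tauH_orig
    (hT : T ⊆ OrigSet V ℓ d ∪ XSet V ℓ d ∪ YSet V ℓ d)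
    (hG : ActivationClosed G τ {v | .orig v ∈ T}) {v : V} (hv : HVert.orig v ∉ T) :
    ((graphH G ℓ d).neighborSet (HVert.orig v) ∩ gadgetAnchor ⁻¹' T).ncard <
      tauH τ (Fintype.card V) ℓ d (.orig v) := by
  have hA (u : V) (j : Fin (d u)) : HVert.aa u j ∉ T := fun h => by
    rcases hT h with (⟨_, h⟩ | ⟨_, h⟩) | ⟨_, h⟩ <;> cases h
  have hB (u : V) (j : Fin (d u)) : HVert.bb u j ∉ T := fun h => by
    rcases hT h with (⟨_, h⟩ | ⟨_, h⟩) | ⟨_, h⟩ <;> cases h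
  calc _ ≤ (HVert.orig '' (G.neighborSet v ∩ {v | .orig v ∈ T})).ncard := by
        refine Set.ncard_le_ncard fun q hq => ?_
        rcases neighbor_cases_of_gadgetAnchor_not_mem hq hv with
          ⟨_, u, hu, hvu, rfl⟩ | ⟨D, hD, rfl, hDT⟩ | ⟨D, hD, rfl⟩
        · cases hvu
          exact ⟨u, ⟨hu, hq.2⟩, rfl⟩
        · cases D <;> simp only [gadHead, reduceCtorEq] at hD
          exacts [(hA _ _ hDT).elim, (hB _ _ hDT).elim]
        · cases hD
    _ = (G.neighborSet v ∩ {v | .orig v ∈ T}).ncard :=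
        Set.ncard_image_of_injective _ fun _ _ h => HVert.orig.inj h
    _ < _ := not_le.1 fun h => hv (hG v h)

theorem ncard_neighborSet_inter_preimage_lt_tauH_xx (hV : {v | HVert.orig v ∈ T} ≠ Set.univ)
    {k : Fin ℓ} (hk : HVert.xx k ∉ T) :
    ((graphH G ℓ d).neighborSet (HVert.xx k) ∩ gadgetAnchor ⁻¹' T).ncard <
      tauH τ (Fintype.card V) ℓ d (.xx k) := by
  calc _ ≤ ((fun v => HVert.gad (.vx v k) .h) '' {v | .orig v ∈ T}).ncard := by
        refine Set.ncard_le_ncard fun q hq => ?_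
        rcases neighbor_cases_of_gadgetAnchor_not_mem hq hk with
          ⟨_, _, _, hku, rfl⟩ | ⟨D, hD, rfl, hDT⟩ | ⟨D, hD, rfl⟩
        · cases hku
        · cases D <;> simp only [gadHead, reduceCtorEq, HVert.xx.injEq] at hD
          subst hD
          exact ⟨_, hDT, rfl⟩
        · cases hD
    _ ≤ {v | HVert.orig v ∈ T}.ncard := Set.ncard_image_le
    _ < Nat.card V := Set.ncard_lt_card hV
    _ = _ := Nat.card_eq_fintype_card

theorem ncard_neighborSet_inter_preimage_lt_tauH_yy (hV : {v | HVert.orig v ∈ T} ≠ Set.univ)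
    {k : Fin ℓ} (hk : HVert.yy k ∉ T) :
    ((graphH G ℓ d).neighborSet (HVert.yy k) ∩ gadgetAnchor ⁻¹' T).ncard <
      tauH τ (Fintype.card V) ℓ d (.yy k) := by
  calc _ ≤ ((fun v => HVert.gad (.vy v k) .h) '' {v | .orig v ∈ T}).ncard := by
        refine Set.ncard_le_ncard fun q hq => ?_
        rcases neighbor_cases_of_gadgetAnchor_not_mem hq hk with
          ⟨_, _, _, hku, rfl⟩ | ⟨D, hD, rfl, hDT⟩ | ⟨D, hD, rfl⟩
        · cases hku
        · cases D <;> simp only [gadHead, reduceCtorEq, HVert.yy.injEq] at hD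
          subst hD
          exact ⟨_, hDT, rfl⟩
        · cases hD
    _ ≤ {v | HVert.orig v ∈ T}.ncard := Set.ncard_image_le
    _ < Nat.card V := Set.ncard_lt_card hV
    _ = _ := Nat.card_eq_fintype_card

theorem ncard_neighborSet_inter_preimage_lt_tauH_aa (hX : ¬XSet V ℓ d ⊆ T) {v : V}
    {j : Fin (d v)} (ha : HVert.aa v j ∉ T) :
    ((graphH G ℓ d).neighborSet (HVert.aa v j) ∩ gadgetAnchor ⁻¹' T).ncard <
      tauH τ (Fintype.card V) ℓ d (.aa v j) := by
  calc _ ≤ ((fun k => HVert.gad (.xa k v j) .h) '' {k | .xx k ∈ T}).ncard := by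
        refine Set.ncard_le_ncard fun q hq => ?_
        rcases neighbor_cases_of_gadgetAnchor_not_mem hq ha with
          ⟨_, _, _, hvu, rfl⟩ | ⟨D, hD, rfl, hDT⟩ | ⟨D, hD, rfl⟩
        · cases hvu
        · cases D <;> simp only [gadHead, reduceCtorEq, HVert.aa.injEq] at hD
          obtain ⟨rfl, ⟨⟩⟩ := hD
          exact ⟨_, hDT, rfl⟩
        · cases hD
    _ ≤ {k | HVert.xx k ∈ T}.ncard := Set.ncard_image_le
    _ < Nat.card (Fin ℓ) :=
        Set.ncard_lt_card fun h => hX (by rintro _ ⟨k, rfl⟩; exact Set.eq_univ_iff_forall.1 h k)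
    _ = _ := Nat.card_fin ℓ

theorem ncard_neighborSet_inter_preimage_lt_tauH_bb (hY : ¬YSet V ℓ d ⊆ T) {v : V}
    {j : Fin (d v)} (hb : HVert.bb v j ∉ T) :
    ((graphH G ℓ d).neighborSet (HVert.bb v j) ∩ gadgetAnchor ⁻¹' T).ncard <
      tauH τ (Fintype.card V) ℓ d (.bb v j) := by
  calc _ ≤ ((fun k => HVert.gad (.yb k v j) .h) '' {k | .yy k ∈ T}).ncard := by
        refine Set.ncard_le_ncard fun q hq => ?_
        rcases neighbor_cases_of_gadgetAnchor_not_mem hq hb with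
          ⟨_, _, _, hvu, rfl⟩ | ⟨D, hD, rfl, hDT⟩ | ⟨D, hD, rfl⟩
        · cases hvu
        · cases D <;> simp only [gadHead, reduceCtorEq, HVert.bb.injEq] at hD
          obtain ⟨rfl, ⟨⟩⟩ := hD
          exact ⟨_, hDT, rfl⟩
        · cases hD
    _ ≤ {k | HVert.yy k ∈ T}.ncard := Set.ncard_image_le
    _ < Nat.card (Fin ℓ) :=
        Set.ncard_lt_card fun h => hY (by rintro _ ⟨k, rfl⟩; exact Set.eq_univ_iff_forall.1 h k)
    _ = _ := Nat.card_fin ℓ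

theorem activationClosed_gadgetAnchor_preimage
    (hT : T ⊆ OrigSet V ℓ d ∪ XSet V ℓ d ∪ YSet V ℓ d) (hX : ¬XSet V ℓ d ⊆ T)
    (hY : ¬YSet V ℓ d ⊆ T) (hV : {v | HVert.orig v ∈ T} ≠ Set.univ)
    (hG : ActivationClosed G τ {v | .orig v ∈ T}) :
    ActivationClosed (graphH G ℓ d) (tauH τ (Fintype.card V) ℓ d) (gadgetAnchor ⁻¹' T) := by
  intro p hp
  by_contra hpT
  refine hp.not_gt ?_
  cases p with
  | orig v => exact ncard_neighborSet_inter_preimage_lt_tauH_orig hT hG hpT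
  | xx k => exact ncard_neighborSet_inter_preimage_lt_tauH_xx hV hpT
  | yy k => exact ncard_neighborSet_inter_preimage_lt_tauH_yy hV hpT
  | aa v j => exact ncard_neighborSet_inter_preimage_lt_tauH_aa hX hpT
  | bb v j => exact ncard_neighborSet_inter_preimage_lt_tauH_bb hY hpT
  | gad D w => exact ncard_neighborSet_inter_preimage_lt_tauH_gad hpT

theorem not_isTargetSet_graphH {S : Set (HVert V ℓ d)}
    (hS : S ⊆ OrigSet V ℓ d ∪ XSet V ℓ d ∪ YSet V ℓ d) (hX : ¬XSet V ℓ d ⊆ S)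
    (hY : ¬YSet V ℓ d ⊆ S) (hG : ¬IsTargetSet G τ {v | HVert.orig v ∈ S}) :
    ¬IsTargetSet (graphH G ℓ d) (tauH τ (Fintype.card V) ℓ d) S := by
  set T := HVert.orig '' activeSet G τ {v | HVert.orig v ∈ S} ∪ S
  have hTV : {v | HVert.orig v ∈ T} = activeSet G τ {v | HVert.orig v ∈ S} := by
    ext v
    simpa [T] using fun hv => subset_activeSet (G := G) (τ := τ) {v | HVert.orig v ∈ S} hv
  have hTX {k : Fin ℓ} (hk : HVert.xx k ∈ T) : HVert.xx k ∈ S := by simpa [T] using hk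
  have hTY {k : Fin ℓ} (hk : HVert.yy k ∈ T) : HVert.yy k ∈ S := by simpa [T] using hk
  have hclosed : ActivationClosed (graphH G ℓ d) (tauH τ (Fintype.card V) ℓ d)
      (gadgetAnchor ⁻¹' T) :=
    activationClosed_gadgetAnchor_preimage
      (Set.union_subset (by rintro _ ⟨v, -, rfl⟩; exact .inl (.inl ⟨v, rfl⟩)) hS)
      (fun h => hX (by rintro _ ⟨k, rfl⟩; exact hTX (h ⟨k, rfl⟩)))
      (fun h => hY (by rintro _ ⟨k, rfl⟩; exact hTY (h ⟨k, rfl⟩)))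
      (hTV ▸ hG) (hTV ▸ activationClosed_activeSet _)
  have hST : S ⊆ gadgetAnchor ⁻¹' T := fun p hp => by
    rcases hS hp with (⟨v, rfl⟩ | ⟨k, rfl⟩) | ⟨k, rfl⟩ <;> exact .inr hp
  intro hH
  obtain ⟨x, hx⟩ := (Set.ne_univ_iff_exists_notMem _).1 hG
  have hxH : HVert.orig x ∈ activeSet (graphH G ℓ d) (tauH τ (Fintype.card V) ℓ d) S :=
    hH ▸ Set.mem_univ _
  exact hx (hTV.subset (activeSet_subset_of_activationClosed hST hclosed hxH))

end OneWay

end TSS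

open TSS in
theorem stmt10_general {V : Type*} [Fintype V] (G : SimpleGraph V) [DecidableRel G.Adj] (τ : V → ℕ)
    (ℓ : ℕ) (hτ : ∀ v : V, τ v ≤ G.degree v)
    (S : Set (HVert V ℓ (fun v => G.degree v)))
    (hsub : S ⊆ OrigSet V ℓ (fun v => G.degree v) ∪ XSet V ℓ (fun v => G.degree v) ∪ YSet V ℓ (fun v => G.degree v)) :
    IsTargetSet (graphH G ℓ (fun v => G.degree v)) (tauH τ (Fintype.card V) ℓ (fun v => G.degree v)) S ↔
      (XSet V ℓ (fun v => G.degree v) ⊆ S ∨ YSet V ℓ (fun v => G.degree v) ⊆ S ∨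
        IsTargetSet G τ { v : V | HVert.orig v ∈ S }) := by
  constructor
  · intro hH
    by_contra! h
    exact not_isTargetSet_graphH hsub h.1 h.2.1 h.2.2 hH
  have hclosed := activationClosed_activeSet (G := graphH G ℓ (fun v => G.degree v))
    (τ := tauH τ (Fintype.card V) ℓ (fun v => G.degree v)) S
  rintro (hX | hY | hG) <;> refine hclosed.eq_univ_of_orig_mem ?_
  · exact hclosed.orig_mem_of_xx_mem hτ fun k => subset_activeSet S (hX ⟨k, rfl⟩)
  · exact hclosed.orig_mem_of_yy_mem hτ fun k => subset_activeSet S (hY ⟨k, rfl⟩)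
  · exact fun v => activeSet_subset_setOf_orig_mem_activeSet_graphH S (hG ▸ Set.mem_univ v)

open TSS in
/-- For any `S ⊆ V ∪ X ∪ Y`, `S` is a target set for `H` iff `X ⊆ S`, or `Y ⊆ S`, or
`S ∩ V` is a target set for `G`. -/
theorem stmt10 {V : Type*} [Fintype V] (G : SimpleGraph V) [DecidableRel G.Adj] (τ : V → ℕ)
    (ℓ : ℕ) (hℓ : 1 ≤ ℓ) (hiso : ∀ v : V, 0 < G.degree v) (hτ : ∀ v : V, τ v ≤ G.degree v)
    (S : Set (HVert V ℓ (fun v => G.degree v)))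
    (hsub : S ⊆ OrigSet V ℓ (fun v => G.degree v) ∪ XSet V ℓ (fun v => G.degree v) ∪ YSet V ℓ (fun v => G.degree v)) :
    IsTargetSet (graphH G ℓ (fun v => G.degree v)) (tauH τ (Fintype.card V) ℓ (fun v => G.degree v)) S ↔
      (XSet V ℓ (fun v => G.degree v) ⊆ S ∨ YSet V ℓ (fun v => G.degree v) ⊆ S ∨
        IsTargetSet G τ { v : V | HVert.orig v ∈ S }) :=
  stmt10_general G τ ℓ hτ S hsub
end

section
/- Let X and Y be finite sets and let (S¹, …, S^T) be a sequence of finite sets such that |S^{t-1} △ S^t| = 1 for every 2 ≤ t ≤ T, X ⊆ S¹ and Y ⊄ S¹, Y ⊆ S^T and X ⊄ S^T, and no S^t satisfies X ∪ Y ⊆ S^t. Then there exists some index t with X ⊄ S^t and Y ⊄ S^t. -/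
/-- In any sequence of finite sets whose consecutive members differ in exactly one element,
which starts at a set containing `X` but not `Y`, ends at a set containing `Y` but not `X`,
and never contains `X ∪ Y`, some member contains neither `X` nor `Y`. -/
theorem stmt13 {α : Type*} [DecidableEq α] (X Y : Finset α) (T : ℕ) (Sfam : ℕ → Finset α)
    (hstep : ∀ t < T, (symmDiff (Sfam t) (Sfam (t + 1))).card = 1)
    (hX0 : X ⊆ Sfam 0) (hY0 : ¬ Y ⊆ Sfam 0)
    (hYT : Y ⊆ Sfam T) (hXT : ¬ X ⊆ Sfam T)
    (hno : ∀ t ≤ T, ¬ X ∪ Y ⊆ Sfam t) :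
    ∃ t ≤ T, ¬ X ⊆ Sfam t ∧ ¬ Y ⊆ Sfam t := by
  classical
  by_contra hcon
  push_neg at hcon
  have hex : ∃ t, t ≤ T ∧ ¬ X ⊆ Sfam t := ⟨T, le_refl T, hXT⟩
  set t0 := Nat.find hex with ht0def
  obtain ⟨ht0T, ht0X⟩ := Nat.find_spec hex
  have ht0pos : 0 < t0 := by
    rcases Nat.eq_zero_or_pos t0 with h | h
    · exfalso; rw [← ht0def, h] at ht0X; exact ht0X hX0
    · exact h
  set s := t0 - 1 with hsdef
  have hs1 : s + 1 = t0 := Nat.succ_pred_eq_of_pos ht0pos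
  have hsT : s < T := by omega
  have hXs : X ⊆ Sfam s := by
    by_contra h
    exact Nat.find_min hex (by omega) ⟨by omega, h⟩
  have hYs : ¬ Y ⊆ Sfam s := fun h => hno s (le_of_lt hsT) (Finset.union_subset hXs h)
  have hY1 : Y ⊆ Sfam t0 := hcon t0 ht0T ht0X
  obtain ⟨x, hxX, hxn⟩ := Finset.not_subset.mp ht0X
  obtain ⟨y, hyY, hyn⟩ := Finset.not_subset.mp hYs
  have hcard := hstep s hsT
  rw [hs1] at hcard
  have hx : x ∈ symmDiff (Sfam s) (Sfam t0) :=
    Finset.mem_symmDiff.mpr (Or.inl ⟨hXs hxX, hxn⟩)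
  have hy : y ∈ symmDiff (Sfam s) (Sfam t0) :=
    Finset.mem_symmDiff.mpr (Or.inr ⟨hY1 hyY, hyn⟩)
  have hne : x ≠ y := fun h => hyn (h ▸ hXs hxX)
  have : 1 < (symmDiff (Sfam s) (Sfam t0)).card :=
    Finset.one_lt_card.mpr ⟨x, hx, y, hy, hne⟩
  omega
end
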